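/- arXiv:1606.09008 — 3 statements merged into one kernel-verified Lean document; each statement's English description precedes it below -/
import Mathlib

section
/- Let U ⊆ ℂⁿ be open, let f, g be holomorphic on U, and let x₀ ∈ U with f(x₀) = 0 and g(x₀) ≠ 0. Assume a Łojasiewicz inequality holds near x₀: there are c > 0, θ ∈ (0,1) and a neighborhood W of x₀ with c·|f(z)|^θ ≤ ‖∇f(z)‖ for all z ∈ W. Fix μ ∈ ℂ with |μ| = 1 and set n_μ(z) = μ·g(z)·conj(∇f(z)) + conj(μ)·f(z)·conj(∇g(z)) (a normal vector to the fibre of z ↦ f(z)·conj(g(z)) at z). Then for every sequence zₙ → x₀ with f(zₙ) ≠ 0 and ∇f(zₙ) ≠ 0: n_μ(zₙ) ≠ 0 for all large n, and n_μ(zₙ)/‖n_μ(zₙ)‖ − μ·g(zₙ)·conj(∇f(zₙ))/‖g(zₙ)·∇f(zₙ)‖ → 0 as n → ∞. (Analytic core of Step 1 in the proof of Theorem 3.1: near points of Sing f outside {g = 0}, the limits of normal directions to the fibres of f·ḡ coincide with the limits of normal directions to the fibres of the holomorphic function f, so the Thom irregularity locus of f·ḡ is contained in {f = g = 0}.) 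-/
open Complex Filter Function Metric

noncomputable section

/-- `ℂⁿ` with its Euclidean (Hermitian) norm. -/
abbrev Cn (n : ℕ) := EuclideanSpace ℂ (Fin n)

/-- Complex gradient `∇f(z) = (∂f/∂z₁,…,∂f/∂zₙ)(z)` of a holomorphic function `f`. -/
def gradC {n : ℕ} (f : Cn n → ℂ) (z : Cn n) : Cn n :=
  WithLp.toLp 2 (fun k => fderiv ℂ f z (EuclideanSpace.single k 1))

/-- Componentwise complex conjugate of a vector in `ℂⁿ`. -/
def conjVec {n : ℕ} (v : Cn n) : Cn n := WithLp.toLp 2 (fun k => starRingEnd ℂ (v k))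

/-!
Write `n_μ = a + b` with `a = μ g · conj ∇f` and `b = μ̄ f · conj ∇g`. Near `x₀`, `‖∇g‖` is bounded
(Cauchy estimates) and `|g|` is bounded below, while the Łojasiewicz inequality with `θ < 1` gives
`|f| ≤ |f|^(1-θ) ‖∇f‖ / c = o(‖∇f‖)`. Hence `‖b‖ = |f| ‖∇g‖ = o(|g| ‖∇f‖) = o(‖a‖)`, and a vector
perturbed by a relatively small one neither vanishes nor moves its direction much:
`‖(a + b)/‖a + b‖ - a/‖a‖‖ ≤ 2‖b‖/‖a‖`.
-/

open NormedSpace Asymptotics Topology InnerProductSpace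

theorem norm_conjVec {n : ℕ} (v : Cn n) : ‖conjVec v‖ = ‖v‖ := by
  simp [conjVec, EuclideanSpace.norm_eq]

theorem conjVec_gradC {n : ℕ} (f : Cn n → ℂ) (z : Cn n) : conjVec (gradC f z) = gradient f z := by
  apply (toDual ℂ (Cn n)).injective
  rw [toDual_gradient]
  ext v
  conv_rhs => rw [← (EuclideanSpace.basisFun (Fin n) ℂ).sum_repr v]
  simp [conjVec, gradC, EuclideanSpace.inner_eq_star_dotProduct, dotProduct]

theorem norm_gradC {n : ℕ} (f : Cn n → ℂ) (z : Cn n) : ‖gradC f z‖ = ‖fderiv ℂ f z‖ := by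
  rw [← norm_conjVec, conjVec_gradC, ← toDual_gradient, LinearIsometryEquiv.norm_map]

theorem DifferentiableOn.fderiv_isBigO_one {E F : Type*} [NormedAddCommGroup E] [NormedSpace ℂ E]
    [NormedAddCommGroup F] [NormedSpace ℂ F] {g : E → F} {s : Set E} {x : E}
    (hg : DifferentiableOn ℂ g s) (hs : s ∈ 𝓝 x) :
    fderiv ℂ g =O[𝓝 x] fun _ => (1 : ℝ) := by
  obtain ⟨δ, hδ, hball⟩ := Metric.mem_nhds_iff.1 <| inter_mem hs <|
    (hg.continuousOn.continuousAt hs).preimage_mem_nhds (ball_mem_nhds (g x) one_pos)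
  refine IsBigO.of_bound (2 / (δ / 2)) ?_
  filter_upwards [ball_mem_nhds x (half_pos hδ)] with z hz
  have hsub : ball z (δ / 2) ⊆ ball x δ := ball_subset_ball' (by linarith [mem_ball.1 hz])
  have hmaps : Set.MapsTo g (ball z (δ / 2)) (closedBall (g z) 2) := fun w hw => by
    have hw' := mem_ball.1 (hball (hsub hw)).2
    have hz' := mem_ball.1 (hball (ball_subset_ball (half_le_self hδ.le) hz)).2
    rw [mem_closedBall]
    linarith [dist_triangle_right (g w) (g z) (g x)]
  simpa using Complex.norm_fderiv_le_div_of_mapsTo_ball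
    (hg.mono (hsub.trans fun y hy => (hball hy).1)) hmaps (half_pos hδ)

theorem isLittleO_of_mul_rpow_le {α E F : Type*} [NormedAddCommGroup E] [NormedAddCommGroup F]
    {l : Filter α} {u : α → E} {v : α → F} {c θ : ℝ} (hc : 0 < c) (hθ : θ < 1)
    (hu : Tendsto u l (𝓝 0)) (h : ∀ᶠ i in l, c * ‖u i‖ ^ θ ≤ ‖v i‖) : u =o[l] v := by
  refine IsLittleO.of_bound fun ε hε => ?_
  have hpow : Tendsto (fun i => ‖u i‖ ^ (1 - θ)) l (𝓝 0) := by
    simpa [Real.zero_rpow (by linarith : 1 - θ ≠ 0)] using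
      hu.norm.rpow_const (Or.inr (by linarith : 0 ≤ 1 - θ))
  filter_upwards [hpow.eventually (eventually_le_nhds (by positivity : 0 < ε * c)), h]
    with i hsmall hi
  calc ‖u i‖ = ‖u i‖ ^ (1 - θ) * ‖u i‖ ^ θ := by
        rw [← Real.rpow_add' (norm_nonneg _) (by simp), sub_add_cancel, Real.rpow_one]
    _ ≤ ε * c * ‖u i‖ ^ θ := by gcongr
    _ = ε * (c * ‖u i‖ ^ θ) := by ring
    _ ≤ ε * ‖v i‖ := by gcongr

theorem Asymptotics.IsLittleO.eventually_add_ne_zero {E : Type*} [NormedAddCommGroup E] {ι : Type*} {l : Filter ι}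
    {a b : ι → E} (h : b =o[l] a) (ha : ∀ᶠ i in l, a i ≠ 0) :
    ∀ᶠ i in l, a i + b i ≠ 0 := by
  filter_upwards [h.right_isBigO_add'.eq_zero_imp, ha] with i hab hai
  exact fun hsum => hai (hab hsum)

section Normalize

variable {V : Type*} [NormedAddCommGroup V] [NormedSpace ℝ V]

theorem norm_normalize_sub_normalize_le (x : V) {y : V} (hy : y ≠ 0) :
    ‖normalize x - normalize y‖ ≤ 2 * ‖x - y‖ / ‖y‖ := by
  have hy' : 0 < ‖y‖ := norm_pos_iff.2 hy
  have hx : ‖(‖x‖⁻¹ - ‖y‖⁻¹) • x‖ ≤ ‖x - y‖ / ‖y‖ := by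
    rcases eq_or_ne x 0 with rfl | hx
    · simp only [smul_zero, norm_zero]
      positivity
    have hx' : 0 < ‖x‖ := norm_pos_iff.2 hx
    calc ‖(‖x‖⁻¹ - ‖y‖⁻¹) • x‖ = |‖y‖ - ‖x‖| / ‖y‖ := by
          rw [norm_smul, Real.norm_eq_abs,
            show ‖x‖⁻¹ - ‖y‖⁻¹ = (‖y‖ - ‖x‖) / (‖x‖ * ‖y‖) by field_simp,
            abs_div, abs_mul, abs_norm, abs_norm]
          field_simp
      _ ≤ ‖x - y‖ / ‖y‖ := by
          gcongr
          simpa [norm_sub_rev] using abs_norm_sub_norm_le y x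
  have hxy : ‖‖y‖⁻¹ • (x - y)‖ = ‖x - y‖ / ‖y‖ := by
    rw [norm_smul, norm_inv, norm_norm, inv_mul_eq_div]
  calc ‖normalize x - normalize y‖ = ‖(‖x‖⁻¹ - ‖y‖⁻¹) • x + ‖y‖⁻¹ • (x - y)‖ := by
        simp only [NormedSpace.normalize]
        congr 1
        module
    _ ≤ ‖x - y‖ / ‖y‖ + ‖x - y‖ / ‖y‖ := norm_add_le_of_le hx hxy.le
    _ = 2 * ‖x - y‖ / ‖y‖ := by ring

variable {ι : Type*} {l : Filter ι} {a b : ι → V}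

theorem Asymptotics.IsLittleO.tendsto_normalize_add_sub_normalize (h : b =o[l] a) :
    Tendsto (fun i => normalize (a i + b i) - normalize (a i)) l (𝓝 0) := by
  refine Metric.tendsto_nhds.2 fun ε hε => ?_
  filter_upwards [h.def (by positivity : 0 < ε / 3)] with i hi
  rw [dist_zero_right]
  rcases eq_or_ne (a i) 0 with ha | ha
  · have hb : b i = 0 := by simpa [ha] using hi
    simpa [ha, hb] using hε
  calc ‖normalize (a i + b i) - normalize (a i)‖ ≤ 2 * ‖b i‖ / ‖a i‖ := by
        simpa using norm_normalize_sub_normalize_le (a i + b i) ha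
    _ ≤ 2 * (ε / 3 * ‖a i‖) / ‖a i‖ := by gcongr
    _ < ε := by
        field_simp [norm_ne_zero_iff.2 ha]
        linarith

end Normalize

theorem normal_directions_fgbar_along_sing_f_general
    {n : ℕ} (U : Set (Cn n)) (hU : IsOpen U)
    (f g : Cn n → ℂ) (hf : DifferentiableOn ℂ f U) (hg : DifferentiableOn ℂ g U)
    (x₀ : Cn n) (hx₀ : x₀ ∈ U) (hfx₀ : f x₀ = 0) (hgx₀ : g x₀ ≠ 0)
    (c θ : ℝ) (hc : 0 < c) (hθ : θ ∈ Set.Ioo (0 : ℝ) 1)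
    (W : Set (Cn n)) (hW : W ∈ nhds x₀)
    (hloja : ∀ z ∈ W, c * ‖f z‖ ^ θ ≤ ‖gradC f z‖)
    (μ : ℂ) (hμ : ‖μ‖ = 1)
    (nμ : Cn n → Cn n)
    (hnμ : ∀ z, nμ z = (μ * g z) • conjVec (gradC f z)
                      + ((starRingEnd ℂ μ) * f z) • conjVec (gradC g z))
    (zs : ℕ → Cn n) (hzs : Tendsto zs atTop (nhds x₀))
    (hzdf : ∀ m, gradC f (zs m) ≠ 0) :
    (∀ᶠ m in atTop, nμ (zs m) ≠ 0) ∧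
    Tendsto
      (fun m => ‖nμ (zs m)‖⁻¹ • nμ (zs m)
        - ‖g (zs m) • gradC f (zs m)‖⁻¹ • ((μ * g (zs m)) • conjVec (gradC f (zs m))))
      atTop (nhds 0) := by
  set a : Cn n → Cn n := fun z => (μ * g z) • conjVec (gradC f z)
  set b : Cn n → Cn n := fun z => (starRingEnd ℂ μ * f z) • conjVec (gradC g z)
  have hUx₀ : U ∈ 𝓝 x₀ := hU.mem_nhds hx₀
  have hg_cont : ContinuousAt g x₀ := hg.continuousOn.continuousAt hUx₀
  have hf_o : f =o[𝓝 x₀] gradC f := isLittleO_of_mul_rpow_le hc hθ.2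
    (hfx₀ ▸ hf.continuousOn.continuousAt hUx₀) (eventually_of_mem hW hloja)
  have hg_O : gradC g =O[𝓝 x₀] g := by
    have h_bdd : gradC g =O[𝓝 x₀] fun _ => (1 : ℝ) := isBigO_norm_left.1 <| by
      simpa only [norm_gradC] using (hg.fderiv_isBigO_one hUx₀).norm_left
    have h_away : (fun _ => (1 : ℝ)) =O[𝓝 x₀] g :=
      (isBigO_const_left_iff_pos_le_norm one_ne_zero).2 ⟨‖g x₀‖ / 2, by positivity,
        hg_cont.norm.eventually (eventually_ge_nhds (half_lt_self (norm_pos_iff.2 hgx₀)))⟩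
    exact h_bdd.trans h_away
  have hba : b =o[𝓝 x₀] a := by
    refine isLittleO_norm_norm.1 ?_
    simpa [a, b, norm_smul, norm_conjVec, hμ, mul_comm] using
      hf_o.norm_norm.mul_isBigO hg_O.norm_norm
  have ha : ∀ᶠ m in atTop, a (zs m) ≠ 0 := by
    filter_upwards [hzs.eventually (hg_cont.eventually_ne hgx₀)] with m hgm
    simp [a, ← norm_ne_zero_iff, norm_conjVec, hμ, hgm, hzdf m]
  have hnμ_zs : ∀ m, nμ (zs m) = a (zs m) + b (zs m) := fun m => hnμ (zs m)
  have hnorm : ∀ m, ‖g (zs m) • gradC f (zs m)‖ = ‖a (zs m)‖ := fun m => by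
    simp [a, norm_smul, norm_conjVec, hμ]
  simp only [hnμ_zs, hnorm]
  exact ⟨(hba.comp_tendsto hzs).eventually_add_ne_zero ha,
    (hba.comp_tendsto hzs).tendsto_normalize_add_sub_normalize⟩

/-- **Analytic core of Step 1 of the proof of Theorem 3.1.**  Let `f, g` be holomorphic on
an open set `U ⊆ ℂⁿ`, `x₀ ∈ U` with `f x₀ = 0`, `g x₀ ≠ 0`, and suppose the Łojasiewicz
inequality `c·|f|^θ ≤ ‖∇f‖` holds on a neighbourhood `W` of `x₀` with `θ ∈ (0,1)`, `c > 0`.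
For `|μ| = 1` put `n_μ(z) = μ·g(z)·conj(∇f(z)) + conj(μ)·f(z)·conj(∇g(z))`, a normal vector
to the fibre of `f·ḡ` at `z`.  Then along any sequence `zₘ → x₀` with `f(zₘ) ≠ 0` and
`∇f(zₘ) ≠ 0`, eventually `n_μ(zₘ) ≠ 0`, and the normalized direction of `n_μ(zₘ)` becomes
asymptotic to the direction of `μ·g(zₘ)·conj(∇f(zₘ))`, i.e. to that of `conj(∇f(zₘ))`. -/
theorem normal_directions_fgbar_along_sing_f
    {n : ℕ} (U : Set (Cn n)) (hU : IsOpen U)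
    (f g : Cn n → ℂ) (hf : DifferentiableOn ℂ f U) (hg : DifferentiableOn ℂ g U)
    (x₀ : Cn n) (hx₀ : x₀ ∈ U) (hfx₀ : f x₀ = 0) (hgx₀ : g x₀ ≠ 0)
    (c θ : ℝ) (hc : 0 < c) (hθ : θ ∈ Set.Ioo (0 : ℝ) 1)
    (W : Set (Cn n)) (hW : W ∈ nhds x₀) (hWU : W ⊆ U)
    (hloja : ∀ z ∈ W, c * ‖f z‖ ^ θ ≤ ‖gradC f z‖)
    (μ : ℂ) (hμ : ‖μ‖ = 1)
    (nμ : Cn n → Cn n)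
    (hnμ : ∀ z, nμ z = (μ * g z) • conjVec (gradC f z)
                      + ((starRingEnd ℂ μ) * f z) • conjVec (gradC g z))
    (zs : ℕ → Cn n) (hzs : Tendsto zs atTop (nhds x₀))
    (hzU : ∀ m, zs m ∈ U) (hzf : ∀ m, f (zs m) ≠ 0) (hzdf : ∀ m, gradC f (zs m) ≠ 0) :
    (∀ᶠ m in atTop, nμ (zs m) ≠ 0) ∧
    Tendsto
      (fun m => ‖nμ (zs m)‖⁻¹ • nμ (zs m)
        - ‖g (zs m) • gradC f (zs m)‖⁻¹ • ((μ * g (zs m)) • conjVec (gradC f (zs m))))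
      atTop (nhds 0) :=
  normal_directions_fgbar_along_sing_f_general U hU f g hf hg x₀ hx₀ hfx₀ hgx₀ c θ hc hθ W hW hloja
    μ hμ nμ hnμ zs hzs hzdf
end
end

section
/- Let f, g be holomorphic on an open set U ⊆ ℂⁿ and let F(z) = f(z)·conj(g(z)). Then for every z ∈ U, the normal space to the fibre of F at z — the orthogonal complement, with respect to the real inner product ⟨v,w⟩_ℝ = Re Σ_k v_k·conj(w_k), of the kernel of fderiv ℝ F z in ℂⁿ — equals the set {μ·g(z)·conj(∇f(z)) + conj(μ)·f(z)·conj(∇g(z)) : μ ∈ ℂ}. In particular this set of normal vectors is a real 2-plane whenever fderiv ℝ F z is surjective, but it need not be a complex line. (Formula (3.2), the instance of Lemma 2.1 for mixed functions of type f·ḡ.) -/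
/-! By the product rule, `dF_z u = f(z)·conj(dg_z u) + conj(g(z))·df_z u`, and the complex-linear
form `df_z` is `u ↦ ⟪conj ∇f(z), u⟫_ℂ`. Expanding gives `⟪n_μ, u⟫_ℝ = Re(conj μ · dF_z u)`, i.e.
`μ ↦ n_μ` is the real adjoint of `dF_z : ℂⁿ → ℂ`, and in finite dimension the orthogonal
complement of a kernel is the range of the adjoint. -/

open Complex Filter Function Metric

noncomputable section

/-- Real inner product `⟨v,w⟩_ℝ = Re Σ_k v_k·conj(w_k)` on `ℂⁿ ≅ ℝ^{2n}`. -/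
def realInnerC {n : ℕ} (v w : Cn n) : ℝ := (∑ k : Fin n, v k * (starRingEnd ℂ) (w k)).re

open scoped InnerProductSpace ComplexConjugate

theorem LinearMap.orthogonal_ker_eq_range_of_inner_eq {𝕜 E F : Type*} [RCLike 𝕜]
    [NormedAddCommGroup E] [InnerProductSpace 𝕜 E] [FiniteDimensional 𝕜 E]
    [NormedAddCommGroup F] [InnerProductSpace 𝕜 F] [FiniteDimensional 𝕜 F]
    (D : E →ₗ[𝕜] F) (T : F → E) (hT : ∀ x y, ⟪T x, y⟫_𝕜 = ⟪x, D y⟫_𝕜) :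
    ((LinearMap.ker D)ᗮ : Set E) = Set.range T := by
  have hT_adjoint : T = D.adjoint := funext fun x ↦
    ext_inner_right 𝕜 fun y ↦ by rw [hT, LinearMap.adjoint_inner_left]
  rw [hT_adjoint, LinearMap.orthogonal_ker, LinearMap.coe_range]

theorem HasFDerivAt.mul_conj {E : Type*} [NormedAddCommGroup E] [NormedSpace ℂ E]
    {f g : E → ℂ} {f' g' : E →L[ℂ] ℂ} {z : E} (hf : HasFDerivAt f f' z)
    (hg : HasFDerivAt g g' z) :
    HasFDerivAt (fun w ↦ f w * conj (g w))
      (f z • (conjCLE.toContinuousLinearMap.comp (g'.restrictScalars ℝ))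
        + conj (g z) • f'.restrictScalars ℝ) z :=
  (hf.restrictScalars ℝ).mul (conjCLE.toContinuousLinearMap.hasFDerivAt.comp z
    (hg.restrictScalars ℝ))

theorem fderiv_mul_conj_apply {E : Type*} [NormedAddCommGroup E] [NormedSpace ℂ E]
    {f g : E → ℂ} {z : E} (hf : DifferentiableAt ℂ f z) (hg : DifferentiableAt ℂ g z) (u : E) :
    fderiv ℝ (fun w ↦ f w * conj (g w)) z u
      = f z * conj (fderiv ℂ g z u) + conj (g z) * fderiv ℂ f z u := by
  simp [(hf.hasFDerivAt.mul_conj hg.hasFDerivAt).fderiv]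

theorem fderiv_apply_eq_inner_conjVec_gradC {n : ℕ} (f : Cn n → ℂ) (z u : Cn n) :
    fderiv ℂ f z u = ⟪conjVec (gradC f z), u⟫_ℂ := by
  conv_lhs => rw [← (EuclideanSpace.basisFun (Fin n) ℂ).toBasis.sum_repr u]
  simp [gradC, conjVec, PiLp.inner_apply]

theorem re_inner_smul_add_conj_smul {E : Type*} [NormedAddCommGroup E]
    [InnerProductSpace ℂ E] (μ p q : ℂ) (a b u : E) :
    re ⟪(μ * q) • a + (conj μ * p) • b, u⟫_ℂ = ⟪μ, p * conj ⟪b, u⟫_ℂ + conj q * ⟪a, u⟫_ℂ⟫_ℝ := by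
  simp only [Complex.inner, inner_add_left, inner_smul_left, map_mul, Complex.conj_conj,
    Complex.add_re, Complex.add_im, Complex.mul_re, Complex.mul_im, Complex.conj_re, Complex.conj_im]
  ring

/- The real inner product on `Cn n` is the `PiLp` one, a sum of real parts, which is not
definitionally the real part of the complex inner product. -/
theorem Cn.real_inner_eq_re_inner {n : ℕ} (v w : Cn n) : ⟪v, w⟫_ℝ = re ⟪v, w⟫_ℂ := by
  simp [PiLp.inner_apply, Complex.re_sum, mul_comm]

theorem realInnerC_eq_real_inner {n : ℕ} (v w : Cn n) : realInnerC v w = ⟪w, v⟫_ℝ := by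
  simp [realInnerC, PiLp.inner_apply, Complex.re_sum]

/-- **Formula (3.2)** (Lemma 2.1 for mixed functions of type `f·ḡ`).  For `f, g`
holomorphic on an open `U ⊆ ℂⁿ` and `F = f·ḡ`, the normal space to the fibre of `F` at any
`z ∈ U` — the orthogonal complement, for the real inner product, of the kernel of
`fderiv ℝ F z` — is the set of vectors
`n_μ = μ·g(z)·conj(∇f(z)) + conj(μ)·f(z)·conj(∇g(z))`, `μ ∈ ℂ`. -/
theorem normal_space_fgbar
    {n : ℕ} (U : Set (Cn n)) (hU : IsOpen U)
    (f g : Cn n → ℂ) (hf : DifferentiableOn ℂ f U) (hg : DifferentiableOn ℂ g U)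
    (F : Cn n → ℂ) (hF : ∀ z, F z = f z * starRingEnd ℂ (g z))
    (z : Cn n) (hz : z ∈ U) :
    {v : Cn n | ∀ u : Cn n, fderiv ℝ F z u = 0 → realInnerC v u = 0}
      = {v : Cn n | ∃ μ : ℂ,
          v = (μ * g z) • conjVec (gradC f z)
            + ((starRingEnd ℂ μ) * f z) • conjVec (gradC g z)} := by
  obtain rfl : F = fun w ↦ f w * conj (g w) := funext hF
  have hfz : DifferentiableAt ℂ f z := hf.differentiableAt (hU.mem_nhds hz)
  have hgz : DifferentiableAt ℂ g z := hg.differentiableAt (hU.mem_nhds hz)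
  have hadjoint : ∀ (μ : ℂ) (u : Cn n),
      ⟪(μ * g z) • conjVec (gradC f z) + (conj μ * f z) • conjVec (gradC g z), u⟫_ℝ
        = ⟪μ, fderiv ℝ (fun w ↦ f w * conj (g w)) z u⟫_ℝ := fun μ u ↦ by
    rw [Cn.real_inner_eq_re_inner, re_inner_smul_add_conj_smul, fderiv_mul_conj_apply hfz hgz,
      fderiv_apply_eq_inner_conjVec_gradC f, fderiv_apply_eq_inner_conjVec_gradC g]
  ext v
  have hv := Set.ext_iff.mp
    ((fderiv ℝ _ z).toLinearMap.orthogonal_ker_eq_range_of_inner_eq _ hadjoint) v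
  simpa [realInnerC_eq_real_inner, Submodule.mem_orthogonal, eq_comm] using hv
end
end

section
/- Let f, g be holomorphic on an open set U ⊆ ℂⁿ, let F(z) = f(z)·conj(g(z)) and V = F⁻¹(0) = f⁻¹(0) ∪ g⁻¹(0). Then Sing F \ V ⊆ Sing(f,g) \ V: every point z with f(z)·g(z) ≠ 0 at which fderiv ℝ F z is not surjective is a point where ∇f(z) and ∇g(z) are ℂ-linearly dependent. (Lemma 2.4(1).) -/
open Complex Filter Function Metric

noncomputable section

/-- Two vectors of `ℂⁿ` are `ℂ`-linearly dependent. -/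
def LinDepC {n : ℕ} (v w : Cn n) : Prop :=
  ∃ a b : ℂ, (a, b) ≠ (0, 0) ∧ a • v + b • w = 0

/-!
If `∇f(z)` and `∇g(z)` are independent then `ker dg(z) ⊄ ker df(z)`, so some `v` has
`dg(z) v = 0` and `df(z) v ≠ 0`. The real derivative of `f ḡ` at `z` is
`w ↦ f(z) · conj (dg(z) w) + conj (g(z)) · df(z) w`; on the complex line `ℂ v` it is
`t v ↦ conj (g(z)) · df(z) v · t`, which is already onto `ℂ` because `g(z) ≠ 0`.
-/

open ComplexConjugate

theorem LinearMap.exists_smul_eq_of_ker_le {𝕜 E : Type*} [Field 𝕜] [AddCommGroup E]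
    [Module 𝕜 E] {φ ψ : E →ₗ[𝕜] 𝕜} (h : LinearMap.ker ψ ≤ LinearMap.ker φ) :
    ∃ a : 𝕜, a • ψ = φ := by
  have hspan := mem_span_of_iInf_ker_le_ker (L := fun _ : Unit => ψ) (by simpa using h)
  rwa [Set.range_const, Submodule.mem_span_singleton] at hspan

section Gradient

variable {n : ℕ} {f g : Cn n → ℂ} {z : Cn n}

theorem linDepC_gradC_of_fderiv_eq_smul {a : ℂ} (h : fderiv ℂ f z = a • fderiv ℂ g z) :
    LinDepC (gradC f z) (gradC g z) :=
  ⟨1, -a, by simp, by ext k; simp [gradC, h]⟩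

theorem exists_fderiv_eq_zero_ne_zero_of_not_linDepC (h : ¬ LinDepC (gradC f z) (gradC g z)) :
    ∃ v, fderiv ℂ g z v = 0 ∧ fderiv ℂ f z v ≠ 0 := by
  by_contra! hker
  obtain ⟨a, ha⟩ := LinearMap.exists_smul_eq_of_ker_le
    (φ := (fderiv ℂ f z : Cn n →ₗ[ℂ] ℂ)) (ψ := fderiv ℂ g z) hker
  exact h (linDepC_gradC_of_fderiv_eq_smul (ContinuousLinearMap.coe_injective ha.symm))

end Gradient

section MulConj

variable {E : Type*} [NormedAddCommGroup E] [NormedSpace ℂ E]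
  {f g : E → ℂ} {φ ψ : E →L[ℂ] ℂ} {z : E}

theorem HasFDerivAt.mul_conj_s10 (hf : HasFDerivAt f φ z) (hg : HasFDerivAt g ψ z) :
    HasFDerivAt (fun w => f w * conj (g w))
      (f z • (conjCLE.toContinuousLinearMap ∘L ψ.restrictScalars ℝ)
        + conj (g z) • φ.restrictScalars ℝ) z :=
  (hf.restrictScalars ℝ).mul (conjCLE.hasFDerivAt.comp z (hg.restrictScalars ℝ))

theorem surjective_fderiv_mul_conj (hf : HasFDerivAt f φ z) (hg : HasFDerivAt g ψ z)
    (hgz : g z ≠ 0) {v : E} (hψv : ψ v = 0) (hφv : φ v ≠ 0) :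
    Surjective (fderiv ℝ (fun w => f w * conj (g w)) z) := by
  rw [(hf.mul_conj_s10 hg).fderiv]
  intro w
  refine ⟨(w / (conj (g z) * φ v)) • v, ?_⟩
  have hgz' : conj (g z) ≠ 0 := (map_ne_zero _).mpr hgz
  simp only [_root_.add_apply, _root_.smul_apply, ContinuousLinearMap.comp_apply,
    ContinuousLinearMap.coe_restrictScalars', map_smul, hψv, map_zero, smul_eq_mul, mul_zero,
    zero_add]
  field_simp

end MulConj

/-- **Lemma 2.4(1).**  For `f, g` holomorphic on an open `U ⊆ ℂⁿ`, `F = f·ḡ` and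
`V = F⁻¹(0)`, one has `Sing F \ V ⊆ Sing(f,g) \ V`:  at every point `z ∈ U` with
`f(z)·g(z) ≠ 0` where `fderiv ℝ F z` is not surjective, the gradients `∇f(z)` and `∇g(z)`
are `ℂ`-linearly dependent. -/
theorem sing_fgbar_off_V_subset_sing_pair
    {n : ℕ} (U : Set (Cn n)) (hU : IsOpen U)
    (f g : Cn n → ℂ) (hf : DifferentiableOn ℂ f U) (hg : DifferentiableOn ℂ g U)
    (F : Cn n → ℂ) (hF : ∀ z, F z = f z * starRingEnd ℂ (g z))
    (z : Cn n) (hz : z ∈ U) (hzV : f z * g z ≠ 0)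
    (hsing : ¬ Surjective ⇑(fderiv ℝ F z)) :
    LinDepC (gradC f z) (gradC g z) := by
  by_contra hdep
  obtain ⟨v, hψv, hφv⟩ := exists_fderiv_eq_zero_ne_zero_of_not_linDepC hdep
  have hfd := (hf.differentiableAt (hU.mem_nhds hz)).hasFDerivAt
  have hgd := (hg.differentiableAt (hU.mem_nhds hz)).hasFDerivAt
  rw [funext hF] at hsing
  exact hsing (surjective_fderiv_mul_conj hfd hgd (right_ne_zero_of_mul hzV) hψv hφv)
end
end
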